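/- arXiv:2505.03342 — 4 statements merged into one kernel-verified Lean document; each statement's English description precedes it below -/
import Mathlib

section
/- Let γ be a finite signed measure on R^d and K(x,y) = -|x-y|. Then for every x ∈ R^d, (K⋆γ)(x) = c_d ∫_{S^{d-1}} (K ⋆ (π_θ)_# γ)(x) dσ(θ), where π_θ(y) = ⟨y, θ⟩θ is the orthogonal projection onto the line Rθ, σ is the uniform probability measure on S^{d-1}, and c_d = √π Γ((d+1)/2)/Γ(d/2). -/
/-! Rotation invariance makes `∫_{S^{d-1}} |⟨v, θ⟩| dθ` a constant multiple of `‖v‖`. The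
constant comes from computing `∫_{ℝ^d} |x₁| e^{-‖x‖²} dx` twice: as a product of one-dimensional
Gaussian integrals, and in polar coordinates. Integrating the resulting identity
`‖x - z‖ = c_d ⨍ |⟨x - z, θ⟩| dσ(θ)` against `g dμ(z)` and exchanging the two integrals (Fubini,
legitimate since `‖z‖ |g z|` is integrable) gives the theorem. -/

open MeasureTheory Metric Set Real

lemma EuclideanSpace.nonempty_of_ne_zero {ι : Type*} {v : EuclideanSpace ℝ ι} (hv : v ≠ 0) :
    Nonempty ι := by
  by_contra h
  rw [not_nonempty_iff] at h
  exact hv (Subsingleton.elim _ _)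

lemma integral_pow_mul_exp_neg_sq_Ioi (n : ℕ) :
    ∫ r in Ioi (0 : ℝ), r ^ n * exp (-r ^ 2) = Gamma ((n + 1) / 2) / 2 := by
  have h := integral_rpow_mul_exp_neg_rpow two_pos (q := n) (by linarith [n.cast_nonneg (α := ℝ)])
  simp only [rpow_natCast, rpow_two] at h
  rw [h]
  ring

lemma integral_abs_mul_exp_neg_sq : ∫ t : ℝ, |t| * exp (-t ^ 2) = 1 := by
  have h := integral_comp_abs (f := fun t => t * exp (-t ^ 2))
  have h1 := integral_pow_mul_exp_neg_sq_Ioi 1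
  simp only [sq_abs, pow_one] at h h1
  rw [h, h1]
  norm_num

lemma EuclideanSpace.integral_abs_apply_mul_exp_neg_norm_sq {ι : Type*} [Fintype ι] (i : ι) :
    ∫ x : EuclideanSpace ℝ ι, |x i| * exp (-‖x‖ ^ 2) = √π ^ (Fintype.card ι - 1) := by
  classical
  have h_prod (y : ι → ℝ) : |y i| * exp (-‖WithLp.toLp 2 y‖ ^ 2)
      = ∏ j, (if j = i then |y j| else 1) * exp (-y j ^ 2) := by
    rw [EuclideanSpace.real_norm_sq_eq, Finset.prod_mul_distrib, Finset.prod_ite_eq',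
      ← exp_sum, Finset.sum_neg_distrib]
    simp
  have h_factor (j : ι) : ∫ t : ℝ, (if j = i then |t| else 1) * exp (-t ^ 2)
      = if j = i then 1 else √π := by
    split_ifs
    · exact integral_abs_mul_exp_neg_sq
    · simpa using integral_gaussian 1
  rw [← (PiLp.volume_preserving_toLp ι).integral_comp
    (MeasurableEquiv.toLp 2 _).measurableEmbedding]
  simp only [h_prod]
  rw [volume_pi,
    integral_fintype_prod_eq_prod (fun j t => (if j = i then |t| else 1) * exp (-t ^ 2))]
  simp only [h_factor]
  rw [Finset.prod_ite, Finset.prod_const_one, one_mul, Finset.prod_const, Finset.filter_ne',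
    Finset.card_erase_of_mem (Finset.mem_univ i), Finset.card_univ]

lemma EuclideanSpace.integral_abs_inner_mul_exp_neg_norm_sq {ι : Type*} [Fintype ι]
    (v : EuclideanSpace ℝ ι) :
    ∫ x : EuclideanSpace ℝ ι, |inner ℝ v x| * exp (-‖x‖ ^ 2) = ‖v‖ * √π ^ (Fintype.card ι - 1) := by
  classical
  rcases eq_or_ne v 0 with rfl | hv
  · simp
  obtain ⟨i⟩ := nonempty_of_ne_zero hv
  set w : EuclideanSpace ℝ ι := ‖v‖ • EuclideanSpace.single i 1
  have hw : ‖w‖ = ‖v‖ := by simp [w, norm_smul]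
  set T := (ℝ ∙ (w - v))ᗮ.reflection
  have hTw : T w = v := Submodule.reflection_sub hw
  rw [← T.measurePreserving.integral_comp T.toHomeomorph.measurableEmbedding,
    ← EuclideanSpace.integral_abs_apply_mul_exp_neg_norm_sq i, ← integral_const_mul]
  congr 1 with x
  have h_inner : inner ℝ v (T x) = ‖v‖ * x i := by
    nth_rw 1 [← hTw]
    rw [T.inner_map_map, real_inner_smul_left, EuclideanSpace.inner_single_left]
    simp
  rw [h_inner, T.norm_map, abs_mul, abs_norm, mul_assoc]

lemma MeasureTheory.Measure.integral_eq_integral_toSphere_mul_integral_Ioi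
    {E : Type*} [NormedAddCommGroup E] [NormedSpace ℝ E] [MeasurableSpace E] [BorelSpace E]
    [FiniteDimensional ℝ E] [Nontrivial E] (μ : Measure E) [μ.IsAddHaarMeasure]
    {F : E → ℝ} {f : sphere (0 : E) 1 → ℝ} {h : ℝ → ℝ}
    (hF : ∀ (θ : sphere (0 : E) 1) (r : ℝ), 0 < r → F (r • (θ : E)) = f θ * h r) :
    ∫ x, F x ∂μ = (∫ θ, f θ ∂μ.toSphere) *
      ∫ r in Ioi (0 : ℝ), r ^ (Module.finrank ℝ E - 1) * h r :=
  calc ∫ x, F x ∂μ = ∫ x : ({0}ᶜ : Set E), F x ∂(μ.comap (↑)) := by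
        rw [integral_subtype_comap (measurableSet_singleton _).compl, restrict_compl_singleton]
    _ = ∫ p, f p.1 * h p.2 ∂μ.toSphere.prod (volumeIoiPow (Module.finrank ℝ E - 1)) := by
        rw [← μ.measurePreserving_homeomorphUnitSphereProd.integral_comp
          (Homeomorph.measurableEmbedding _)]
        congr 1 with x
        have hx : 0 < ‖(x : E)‖ := norm_pos_iff.2 x.2
        simpa [smul_inv_smul₀ hx.ne'] using hF (homeomorphUnitSphereProd E x).1 ‖(x : E)‖ hx
    _ = (∫ θ, f θ ∂μ.toSphere) *
          ∫ r : Ioi (0 : ℝ), h r ∂volumeIoiPow (Module.finrank ℝ E - 1) :=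
        integral_prod_mul f (fun r : Ioi (0 : ℝ) => h r)
    _ = _ := by
        simp only [volumeIoiPow, ENNReal.ofReal]
        rw [integral_withDensity_eq_integral_smul
          (measurable_subtype_coe.pow_const _).real_toNNReal,
          integral_subtype_comap measurableSet_Ioi
            fun r ↦ Real.toNNReal (r ^ (Module.finrank ℝ E - 1)) • h r]
        refine congrArg _ (setIntegral_congr_fun measurableSet_Ioi fun r hr => ?_)
        rw [NNReal.smul_def, Real.coe_toNNReal _ (pow_nonneg (le_of_lt hr) _), smul_eq_mul]

lemma EuclideanSpace.integral_abs_inner_toSphere {ι : Type*} [Fintype ι]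
    (v : EuclideanSpace ℝ ι) :
    ∫ θ : sphere (0 : EuclideanSpace ℝ ι) 1, |inner ℝ v (θ : EuclideanSpace ℝ ι)|
        ∂(volume : Measure (EuclideanSpace ℝ ι)).toSphere
      = ‖v‖ * (2 * √π ^ (Fintype.card ι - 1) / Gamma ((Fintype.card ι + 1) / 2)) := by
  rcases eq_or_ne v 0 with rfl | hv
  · simp
  have := nonempty_of_ne_zero hv
  have hpolar :=
    (volume : Measure (EuclideanSpace ℝ ι)).integral_eq_integral_toSphere_mul_integral_Ioi
      (F := fun x => |inner ℝ v x| * exp (-‖x‖ ^ 2)) (h := fun r => r * exp (-r ^ 2))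
      (f := fun θ => |inner ℝ v (θ : EuclideanSpace ℝ ι)|) fun θ r hr => by
        simp only [real_inner_smul_right, norm_smul, norm_eq_of_mem_sphere, abs_mul,
          abs_of_pos hr, Real.norm_of_nonneg hr.le, mul_one]
        ring
  have h_radial : ∫ r in Ioi (0 : ℝ), r ^ (Fintype.card ι - 1) * (r * exp (-r ^ 2))
      = Gamma ((Fintype.card ι + 1) / 2) / 2 := by
    rw [← integral_pow_mul_exp_neg_sq_Ioi]
    refine setIntegral_congr_fun measurableSet_Ioi fun r _ => ?_
    rw [← mul_assoc, pow_sub_one_mul Fintype.card_ne_zero]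
  rw [EuclideanSpace.integral_abs_inner_mul_exp_neg_norm_sq, finrank_euclideanSpace, h_radial]
    at hpolar
  have hΓ : 0 < Gamma ((Fintype.card ι + 1) / 2) := Gamma_pos_of_pos (by positivity)
  field_simp
  linarith

theorem EuclideanSpace.norm_eq_mul_average_abs_inner {ι : Type*} [Fintype ι]
    (v : EuclideanSpace ℝ ι) :
    ‖v‖ = √π * Gamma ((Fintype.card ι + 1) / 2) / Gamma (Fintype.card ι / 2) *
      ⨍ θ : sphere (0 : EuclideanSpace ℝ ι) 1, |inner ℝ v (θ : EuclideanSpace ℝ ι)|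
        ∂(volume : Measure (EuclideanSpace ℝ ι)).toSphere := by
  rcases eq_or_ne v 0 with rfl | hv
  · simp
  have := nonempty_of_ne_zero hv
  have h_mass : (volume : Measure (EuclideanSpace ℝ ι)).toSphere.real univ
      = Fintype.card ι * (√π ^ Fintype.card ι / Gamma (Fintype.card ι / 2 + 1)) := by
    rw [Measure.toSphere_real_apply_univ, finrank_euclideanSpace, measureReal_def,
      EuclideanSpace.volume_ball, ENNReal.toReal_mul, ENNReal.toReal_ofReal (by positivity)]
    simp
  rw [average_eq, integral_abs_inner_toSphere, h_mass, smul_eq_mul,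
    Gamma_add_one (by positivity), ← pow_sub_one_mul Fintype.card_ne_zero]
  have hΓ : 0 < Gamma ((Fintype.card ι + 1) / 2) := Gamma_pos_of_pos (by positivity)
  have hΓ' : 0 < Gamma (Fintype.card ι / 2) := Gamma_pos_of_pos (by positivity)
  field_simp

lemma MeasureTheory.average_integral_comm {α β E : Type*} [MeasurableSpace α] [MeasurableSpace β]
    [NormedAddCommGroup E] [NormedSpace ℝ E] {ν : Measure α} {μ : Measure β} [SFinite ν] [SFinite μ]
    {F : α → β → E} (hF : Integrable (Function.uncurry F) (ν.prod μ)) :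
    ⨍ a, ∫ b, F a b ∂μ ∂ν = ∫ b, ⨍ a, F a b ∂ν ∂μ := by
  simp only [average_eq, integral_integral_swap hF, integral_smul]

lemma integrable_neg_abs_inner_sub_mul_prod {E : Type*} [NormedAddCommGroup E]
    [InnerProductSpace ℝ E] [MeasurableSpace E] [BorelSpace E] [SecondCountableTopology E]
    (ν : Measure (sphere (0 : E) 1)) [IsFiniteMeasure ν] {μ : Measure E} [SFinite μ] {g : E → ℝ}
    (hg : Integrable g μ) (hg' : Integrable (fun z => ‖z‖ * |g z|) μ) (x : E) :
    Integrable (fun p : sphere (0 : E) 1 × E => -|inner ℝ (x - p.2) (p.1 : E)| * g p.2)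
      (ν.prod μ) := by
  have h_bound : Integrable (fun z => (‖x‖ + ‖z‖) * |g z|) μ :=
    ((hg.abs.const_mul ‖x‖).add hg').congr
      (.of_forall fun z => by simp only [Pi.add_apply]; ring)
  refine (h_bound.comp_snd ν).mono' ?_ (.of_forall fun p => ?_)
  · exact (((continuous_const.sub continuous_snd).inner
      (continuous_subtype_val.comp continuous_fst)).abs.neg.aestronglyMeasurable).mul
      hg.1.comp_snd
  · calc ‖-|inner ℝ (x - p.2) (p.1 : E)| * g p.2‖ = |inner ℝ (x - p.2) (p.1 : E)| * |g p.2| := by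
          simp
      _ ≤ ‖x - p.2‖ * |g p.2| := by
          gcongr
          simpa [norm_eq_of_mem_sphere] using abs_real_inner_le_norm (x - p.2) (p.1 : E)
      _ ≤ (‖x‖ + ‖p.2‖) * |g p.2| := by gcongr; exact norm_sub_le _ _

theorem ed_convolution_sliced_general (d : ℕ)
    (μ : Measure (EuclideanSpace ℝ (Fin d))) [IsFiniteMeasure μ]
    (g : EuclideanSpace ℝ (Fin d) → ℝ) (hg : Integrable g μ)
    (hg' : Integrable (fun z => ‖z‖ * |g z|) μ)
    (x : EuclideanSpace ℝ (Fin d)) :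
    ∫ z, -‖x - z‖ * g z ∂μ =
      (Real.sqrt Real.pi * Real.Gamma ((d + 1) / 2) / Real.Gamma (d / 2)) *
        ⨍ θ : sphere (0 : EuclideanSpace ℝ (Fin d)) 1,
          (∫ z, -|(inner ℝ (x - z) (θ : EuclideanSpace ℝ (Fin d)) : ℝ)| * g z ∂μ)
            ∂((volume : Measure (EuclideanSpace ℝ (Fin d))).toSphere) := by
  rw [average_integral_comm (integrable_neg_abs_inner_sub_mul_prod _ hg hg' x),
    ← integral_const_mul]
  congr 1 with z
  have h_slice := EuclideanSpace.norm_eq_mul_average_abs_inner (x - z)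
  rw [Fintype.card_fin, average_eq'] at h_slice
  rw [average_eq', integral_mul_const, integral_neg, h_slice]
  ring

/-- The convolution of the Energy-Distance kernel `K(x,y) = -|x-y|` with a finite
signed measure `γ = g·μ` equals `c_d` times the average over directions
`θ ∈ S^{d-1}` of the one-dimensional convolutions with the projected measures
`(π_θ)_# γ`, i.e. `(K⋆γ)(x) = c_d ∫_{S^{d-1}} ∫ -|⟨x-z,θ⟩| dγ(z) dσ(θ)`. -/
theorem ed_convolution_sliced (d : ℕ) (hd : 1 ≤ d)
    (μ : Measure (EuclideanSpace ℝ (Fin d))) [IsFiniteMeasure μ]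
    (g : EuclideanSpace ℝ (Fin d) → ℝ) (hg : Integrable g μ)
    (hg' : Integrable (fun z => ‖z‖ * |g z|) μ)
    (x : EuclideanSpace ℝ (Fin d)) :
    ∫ z, -‖x - z‖ * g z ∂μ =
      (Real.sqrt Real.pi * Real.Gamma ((d + 1) / 2) / Real.Gamma (d / 2)) *
        ⨍ θ : sphere (0 : EuclideanSpace ℝ (Fin d)) 1,
          (∫ z, -|(inner ℝ (x - z) (θ : EuclideanSpace ℝ (Fin d)) : ℝ)| * g z ∂μ)
            ∂((volume : Measure (EuclideanSpace ℝ (Fin d))).toSphere) :=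
  ed_convolution_sliced_general d μ g hg hg' x
end

section
/- Let K(x,y) = -|x-y| on R^d, let X = (x_1,…,x_n) be distinct points, and let C_X = {γ ∈ R^n : Σ_i γ_i = 0}. Then for every nonzero γ ∈ C_X, the quadratic form Σ_{i,j} γ_i γ_j K(x_i, x_j) is strictly positive. -/
/-!
On the line, put `F u = ∑ i, γ i * 𝟙[s i ≤ u]`. Since `|a - b| = ∫ (𝟙[a ≤ u] - 𝟙[b ≤ u])² du`
and `∑ γᵢ γⱼ (aᵢ - aⱼ)² = -2 (∑ γᵢ aᵢ)²` whenever `∑ γᵢ = 0`, the form equals `2 ∫ F²`. This is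
positive because `F` equals `γᵢ ≠ 0` just to the right of the leftmost `sᵢ` with `γᵢ ≠ 0`.

In higher dimension, rotation invariance gives `∫_{‖u‖ ≤ 1} |⟪u, v⟫| du = c ‖v‖` with `c ≥ 0`
independent of `v`. So `c` times the form is the average over the unit ball of the
one-dimensional forms of the projections `⟪u, xᵢ⟫`, which are distinct, hence the forms
positive, for almost every `u`.
-/

open MeasureTheory Set Filter Topology Function Metric
open scoped RealInnerProductSpace

section Line

variable {ι : Type*} [Fintype ι]

theorem sum_mul_mul_sub_sq_of_sum_eq_zero {R : Type*} [CommRing R] (γ a : ι → R)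
    (hγ : ∑ i, γ i = 0) :
    ∑ i, ∑ j, γ i * γ j * (a i - a j) ^ 2 = -2 * (∑ i, γ i * a i) ^ 2 := by
  have expand : ∀ i j, γ i * γ j * (a i - a j) ^ 2
      = γ j * (γ i * a i ^ 2) + γ i * (γ j * a j ^ 2) - 2 * ((γ i * a i) * (γ j * a j)) := by
    intro i j; ring
  simp only [expand, Finset.sum_sub_distrib, Finset.sum_add_distrib, ← Finset.mul_sum,
    ← Finset.sum_mul, hγ]
  ring

theorem sq_indicator_Ici_sub_indicator_Ici (a b u : ℝ) :
    ((Ici a).indicator (1 : ℝ → ℝ) u - (Ici b).indicator 1 u) ^ 2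
      = (Ico (min a b) (max a b)).indicator 1 u := by
  simp only [indicator, mem_Ici, mem_Ico, min_le_iff, lt_max_iff, Pi.one_apply]
  split_ifs <;> grind

theorem integral_sq_indicator_Ici_sub_indicator_Ici (a b : ℝ) :
    ∫ u, ((Ici a).indicator (1 : ℝ → ℝ) u - (Ici b).indicator 1 u) ^ 2 = |a - b| := by
  simp only [sq_indicator_Ici_sub_indicator_Ici, integral_indicator_one measurableSet_Ico,
    Real.volume_real_Ico_of_le min_le_max, max_sub_min_eq_abs']

theorem integrable_sq_indicator_Ici_sub_indicator_Ici (a b : ℝ) :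
    Integrable fun u => ((Ici a).indicator (1 : ℝ → ℝ) u - (Ici b).indicator 1 u) ^ 2 := by
  simp only [sq_indicator_Ici_sub_indicator_Ici]
  exact (integrable_indicator_iff measurableSet_Ico).2 (integrableOn_const measure_Ico_lt_top.ne)

theorem sq_sum_mul_indicator_Ici_eq (s γ : ι → ℝ) (hγ : ∑ i, γ i = 0) (u : ℝ) :
    (∑ i, γ i * (Ici (s i)).indicator 1 u) ^ 2 = -2⁻¹ * ∑ i, ∑ j,
      γ i * γ j * ((Ici (s i)).indicator (1 : ℝ → ℝ) u - (Ici (s j)).indicator 1 u) ^ 2 := by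
  rw [sum_mul_mul_sub_sq_of_sum_eq_zero γ _ hγ]; ring

theorem integrable_sq_sum_mul_indicator_Ici (s γ : ι → ℝ) (hγ : ∑ i, γ i = 0) :
    Integrable fun u => (∑ i, γ i * (Ici (s i)).indicator 1 u) ^ 2 := by
  simp only [sq_sum_mul_indicator_Ici_eq s γ hγ]
  exact (integrable_finsetSum _ fun i _ => integrable_finsetSum _ fun j _ =>
    (integrable_sq_indicator_Ici_sub_indicator_Ici _ _).const_mul _).const_mul _

theorem sum_mul_mul_neg_abs_sub_eq_two_mul_integral_sq (s γ : ι → ℝ) (hγ : ∑ i, γ i = 0) :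
    ∑ i, ∑ j, γ i * γ j * (-|s i - s j|)
      = 2 * ∫ u, (∑ i, γ i * (Ici (s i)).indicator 1 u) ^ 2 := by
  have hint : ∀ i j, Integrable fun u => γ i * γ j *
      ((Ici (s i)).indicator (1 : ℝ → ℝ) u - (Ici (s j)).indicator 1 u) ^ 2 := fun i j =>
    (integrable_sq_indicator_Ici_sub_indicator_Ici _ _).const_mul _
  simp only [sq_sum_mul_indicator_Ici_eq s γ hγ, integral_const_mul,
    integral_finsetSum _ fun i _ => integrable_finsetSum _ fun j _ => hint i j,
    integral_finsetSum _ fun j _ => hint _ j, integral_sq_indicator_Ici_sub_indicator_Ici,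
    mul_neg, Finset.sum_neg_distrib]
  ring

theorem eventually_nhdsGE_sum_mul_indicator_Ici_eq (s γ : ι → ℝ) (a : ℝ) :
    ∀ᶠ u in 𝓝[≥] a, ∑ i, γ i * (Ici (s i)).indicator (1 : ℝ → ℝ) u
      = ∑ i, γ i * (Ici (s i)).indicator 1 a := by
  have each : ∀ i, ∀ᶠ u in 𝓝[≥] a, (s i ≤ u ↔ s i ≤ a) := fun i => by
    rcases le_or_gt (s i) a with h | h
    · filter_upwards [self_mem_nhdsWithin] with u hu
      exact iff_of_true (h.trans hu) h
    · filter_upwards [nhdsWithin_le_nhds (Iio_mem_nhds h)] with u hu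
      exact iff_of_false (not_le.2 hu) (not_le.2 h)
  filter_upwards [eventually_all.2 each] with u hu
  simp only [indicator, mem_Ici, hu, Pi.one_apply]

theorem exists_sum_mul_indicator_Ici_ne_zero {s : ι → ℝ} (hs : Injective s) {γ : ι → ℝ}
    (hγ : γ ≠ 0) : ∃ a, ∑ i, γ i * (Ici (s i)).indicator (1 : ℝ → ℝ) a ≠ 0 := by
  classical
  obtain ⟨i₀, hi₀, hmin⟩ := (Finset.univ.filter (γ · ≠ 0)).exists_min_image s
    (by simpa [Finset.filter_nonempty_iff, funext_iff] using hγ)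
  refine ⟨s i₀, ?_⟩
  rw [Finset.sum_eq_single i₀]
  · simpa using hi₀
  · intro j _ hj
    by_cases hγj : γ j = 0
    · simp [hγj]
    have : s i₀ < s j := (hmin j (by simpa using hγj)).lt_of_ne (hs.ne hj.symm)
    simp [not_le.2 this]
  · simp

theorem integral_sq_sum_mul_indicator_Ici_pos {s : ι → ℝ} (hs : Injective s) {γ : ι → ℝ}
    (hsum : ∑ i, γ i = 0) (hγ : γ ≠ 0) :
    0 < ∫ u, (∑ i, γ i * (Ici (s i)).indicator 1 u) ^ 2 := by
  obtain ⟨a, ha⟩ := exists_sum_mul_indicator_Ici_ne_zero hs hγ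
  obtain ⟨b, hab, hb⟩ := mem_nhdsGE_iff_exists_Ico_subset.1
    (eventually_nhdsGE_sum_mul_indicator_Ici_eq s γ a)
  rw [integral_pos_iff_support_of_nonneg (fun u => sq_nonneg _)
    (integrable_sq_sum_mul_indicator_Ici s γ hsum)]
  calc (0 : ENNReal) < volume (Ico a b) := by simpa using hab
    _ ≤ _ := measure_mono fun u hu => by simpa [show _ = _ from hb hu] using ha

theorem sum_mul_mul_neg_abs_sub_pos {s : ι → ℝ} (hs : Injective s) {γ : ι → ℝ}
    (hsum : ∑ i, γ i = 0) (hγ : γ ≠ 0) : 0 < ∑ i, ∑ j, γ i * γ j * (-|s i - s j|) := by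
  rw [sum_mul_mul_neg_abs_sub_eq_two_mul_integral_sq s γ hsum]
  exact mul_pos two_pos (integral_sq_sum_mul_indicator_Ici_pos hs hsum hγ)

end Line

theorem integral_pos_of_ae_pos {α : Type*} [MeasurableSpace α] {μ : Measure α} (hμ : μ ≠ 0)
    {f : α → ℝ} (hf : ∀ᵐ x ∂μ, 0 < f x) (hfi : Integrable f μ) : 0 < ∫ x, f x ∂μ := by
  rw [integral_pos_iff_support_of_nonneg_ae (hf.mono fun _ hx => hx.le) hfi, pos_iff_ne_zero]
  intro h
  have hzero : ∀ᵐ x ∂μ, f x = 0 := ae_iff.2 h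
  have := ae_neBot.2 hμ
  obtain ⟨x, hpos, hzero⟩ := (hf.and hzero).exists
  exact hpos.ne' hzero

section InnerProductSpace

variable {E : Type*} [NormedAddCommGroup E] [InnerProductSpace ℝ E] [FiniteDimensional ℝ E]
  [MeasurableSpace E] [BorelSpace E]

theorem addHaar_setOf_inner_eq_zero (μ : Measure E) [μ.IsAddHaarMeasure] {v : E} (hv : v ≠ 0) :
    μ {u | ⟪u, v⟫ = 0} = 0 := by
  have : {u | ⟪u, v⟫ = 0} = ((ℝ ∙ v)ᗮ : Submodule ℝ E) := by
    ext u
    simp [Submodule.mem_orthogonal_singleton_iff_inner_left]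
  rw [this]
  refine Measure.addHaar_submodule μ _ fun h => hv ?_
  have hv' : v ∈ (ℝ ∙ v)ᗮ := h ▸ Submodule.mem_top
  simpa using Submodule.mem_orthogonal_singleton_iff_inner_right.1 hv'

theorem ae_injective_inner (μ : Measure E) [μ.IsAddHaarMeasure] {ι : Type*} [Finite ι]
    {x : ι → E} (hx : Injective x) : ∀ᵐ u ∂μ, Injective fun i => ⟪u, x i⟫ := by
  have pair : ∀ i j, i ≠ j → ∀ᵐ u ∂μ, ⟪u, x i⟫ ≠ ⟪u, x j⟫ := fun i j hij => by
    simpa [ae_iff, inner_sub_right, sub_eq_zero] using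
      addHaar_setOf_inner_eq_zero μ (sub_ne_zero.2 (hx.ne hij))
  filter_upwards [ae_all_iff.2 fun i => ae_all_iff.2 fun j =>
    eventually_imp_distrib_left.2 (pair i j)] with u hu i j
  exact not_imp_not.1 (hu i j)

theorem setIntegral_closedBall_comp_inner_eq_of_norm_eq (g : ℝ → ℝ) {v w : E} (h : ‖v‖ = ‖w‖) :
    ∫ u in closedBall 0 1, g ⟪u, v⟫ = ∫ u in closedBall 0 1, g ⟪u, w⟫ := by
  set R := Submodule.reflection (ℝ ∙ (v - w))ᗮ
  have hR : R v = w := Submodule.reflection_sub h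
  have hball : R ⁻¹' closedBall 0 1 = closedBall 0 1 := by
    ext u; simp
  calc ∫ u in closedBall 0 1, g ⟪u, v⟫
      = ∫ u in R ⁻¹' closedBall 0 1, g ⟪R u, w⟫ := by
        rw [hball, ← hR]; simp only [LinearIsometryEquiv.inner_map_map]
    _ = ∫ u in closedBall 0 1, g ⟪u, w⟫ :=
        R.measurePreserving.setIntegral_preimage_emb R.toHomeomorph.measurableEmbedding
          (fun u => g ⟪u, w⟫) _

theorem setIntegral_closedBall_abs_inner {e : E} (he : ‖e‖ = 1) (v : E) :
    ∫ u in closedBall 0 1, |⟪u, v⟫|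
      = ‖v‖ * ∫ u in closedBall 0 1, |⟪u, e⟫| := by
  rcases eq_or_ne v 0 with rfl | hv
  · simp
  have hw : ‖‖v‖⁻¹ • v‖ = ‖e‖ := by
    rw [norm_smul, norm_inv, norm_norm, inv_mul_cancel₀ (norm_ne_zero_iff.2 hv), he]
  calc ∫ u in closedBall 0 1, |⟪u, v⟫|
      = ∫ u in closedBall 0 1, ‖v‖ * |⟪u, ‖v‖⁻¹ • v⟫| := by
        congr with u
        rw [inner_smul_right, abs_mul, abs_inv, abs_norm,
          mul_inv_cancel_left₀ (norm_ne_zero_iff.2 hv)]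
    _ = ‖v‖ * ∫ u in closedBall 0 1, |⟪u, e⟫| := by
        rw [integral_const_mul, setIntegral_closedBall_comp_inner_eq_of_norm_eq (|·|) hw]

theorem setIntegral_closedBall_sum_mul_mul_neg_abs_inner_sub {ι : Type*} [Fintype ι] {e : E}
    (he : ‖e‖ = 1) (x : ι → E) (γ : ι → ℝ) :
    ∫ u in closedBall 0 1, ∑ i, ∑ j, γ i * γ j * (-|⟪u, x i⟫ - ⟪u, x j⟫|)
      = (∫ u in closedBall 0 1, |⟪u, e⟫|) * ∑ i, ∑ j, γ i * γ j * (-dist (x i) (x j)) := by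
  have hint : ∀ i j, IntegrableOn (fun u => γ i * γ j * (-|⟪u, x i⟫ - ⟪u, x j⟫|))
      (closedBall 0 1) := fun i j =>
    ContinuousOn.integrableOn_compact (isCompact_closedBall 0 1) (by fun_prop)
  rw [integral_finsetSum _ fun i _ => integrable_finsetSum _ fun j _ => hint i j, Finset.mul_sum]
  refine Finset.sum_congr rfl fun i _ => ?_
  rw [integral_finsetSum _ fun j _ => hint i j, Finset.mul_sum]
  refine Finset.sum_congr rfl fun j _ => ?_
  rw [integral_const_mul, integral_neg]
  simp only [← inner_sub_right]
  rw [setIntegral_closedBall_abs_inner he, dist_eq_norm]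
  ring

theorem sum_mul_mul_neg_dist_pos {ι : Type*} [Fintype ι] {x : ι → E} (hx : Injective x)
    {γ : ι → ℝ} (hsum : ∑ i, γ i = 0) (hγ : γ ≠ 0) :
    0 < ∑ i, ∑ j, γ i * γ j * (-dist (x i) (x j)) := by
  rcases subsingleton_or_nontrivial E with hE | hE
  · have : Subsingleton ι := hx.subsingleton
    exact absurd (funext fun i => by simpa [Fintype.sum_subsingleton _ i] using hsum) hγ
  obtain ⟨e, he⟩ := exists_norm_eq E zero_le_one
  have projected : ∀ᵐ u ∂volume.restrict (closedBall (0 : E) 1),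
      0 < ∑ i, ∑ j, γ i * γ j * (-|⟪u, x i⟫ - ⟪u, x j⟫|) :=
    ae_restrict_of_ae <| (ae_injective_inner volume hx).mono fun u hu =>
      sum_mul_mul_neg_abs_sub_pos hu hsum hγ
  have hball : volume.restrict (closedBall (0 : E) 1) ≠ 0 := by
    simpa [Measure.restrict_eq_zero] using
      (measure_closedBall_pos volume (0 : E) one_pos).ne'
  have hint : IntegrableOn (fun u => ∑ i, ∑ j, γ i * γ j * (-|⟪u, x i⟫ - ⟪u, x j⟫|))
      (closedBall 0 1) :=
    ContinuousOn.integrableOn_compact (isCompact_closedBall 0 1) (by fun_prop)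
  have hpos := integral_pos_of_ae_pos hball projected hint
  rw [setIntegral_closedBall_sum_mul_mul_neg_abs_inner_sub he] at hpos
  exact pos_of_mul_pos_right hpos
    (setIntegral_nonneg measurableSet_closedBall fun _ _ => abs_nonneg _)

end InnerProductSpace

/-- Conditional positive definiteness of the Energy-Distance kernel
`K(x,y) = -|x-y|`: for distinct points and nonzero zero-sum coefficients, the
quadratic form `Σ_{i,j} γ_i γ_j K(x_i,x_j)` is strictly positive. -/
theorem ed_kernel_conditionally_positive_definite (d n : ℕ)
    (x : Fin n → EuclideanSpace ℝ (Fin d)) (hx : Function.Injective x)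
    (γ : Fin n → ℝ) (hsum : ∑ i, γ i = 0) (hγ : γ ≠ 0) :
    0 < ∑ i, ∑ j, γ i * γ j * (-(dist (x i) (x j))) :=
  sum_mul_mul_neg_dist_pos hx hsum hγ
end

section
/- Fix σ, r > 0 and n ≥ 1. Let M(n, r, σr) be the set of vector measures Γ = Σ_{i=1}^n γ_i δ_{x_i} with γ_i ∈ R, Σ_i γ_i = 0, all x_i in the closed ball B(0, σr), and pairwise distances |x_i - x_j| ≥ r for i ≠ j. Then there exists λ_σ > 0 (depending only on σ, n, d) such that for all Γ ∈ M(n, r, σr): |Γ|_TV ≤ λ_σ √(n/r) · ‖Γ‖_K, where ‖Γ‖_K^2 = Σ_{i,j} γ_i γ_j K(x_i, x_j) with K the Energy-Distance kernel. -/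
/-!
Write `|t| = C⁻¹ ∫₀^∞ (1 - e^{-s t²}) s^{-3/2} ds` with `C > 0`. When `∑ γᵢ = 0` the constant
part cancels and the energy `-∑ γᵢ γⱼ |xᵢ - xⱼ|` becomes
`C⁻¹ ∫₀^∞ (∑ γᵢ γⱼ e^{-s |xᵢ - xⱼ|²}) s^{-3/2} ds`.
Each Gaussian quadratic form is, up to a positive factor, `∫ |∑ γₖ e^{i⟨xₖ, v⟩}|² e^{-|v|²/4s} dv`,
which is positive for distinct points and `γ ≠ 0` by linear independence of characters.
So the energy is positive on the compact set of configurations with `r = 1` and `∑ γᵢ² = 1`, hence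
bounded below there by some `c > 0`. The energy is quadratic in `γ` and `1`-homogeneous under
dilations, so `c r ∑ γᵢ² ≤ energy` at every scale `r`, and `∑ |γᵢ| ≤ √n (∑ γᵢ²)^{1/2}` gives the
bound with `λ = c^{-1/2}`.
-/

open MeasureTheory Real Set Finset Function
open scoped RealInnerProductSpace

section GaussianKernel

variable {V : Type*} [NormedAddCommGroup V] [InnerProductSpace ℝ V]

noncomputable def expInnerHom (w : V) : Multiplicative V →* ℂ where
  toFun v := Complex.exp (Complex.I * ⟪w, v.toAdd⟫)
  map_one' := by simp
  map_mul' a b := by simp [inner_add_right, mul_add, Complex.exp_add]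

lemma expInnerHom_injective : Injective (expInnerHom (V := V)) := by
  intro w w' h
  by_contra hne
  have hu : ‖w - w'‖ ≠ 0 := norm_ne_zero_iff.mpr (sub_ne_zero.mpr hne)
  -- at `v = π ‖w - w'‖⁻² (w - w')` the two characters differ by the factor `exp (iπ) = -1`
  set v : V := (π / ‖w - w'‖ ^ 2) • (w - w')
  have hv : ⟪w, v⟫ = ⟪w', v⟫ + π := by
    rw [← sub_eq_iff_eq_add', ← inner_sub_left, real_inner_smul_right,
      real_inner_self_eq_norm_sq]
    field_simp
  have := DFunLike.congr_fun h (Multiplicative.ofAdd v)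
  simp only [expInnerHom, MonoidHom.coe_mk, OneHom.coe_mk, toAdd_ofAdd, hv, Complex.ofReal_add,
    mul_add, Complex.exp_add, Complex.exp_pi_mul_I, mul_comm Complex.I (π : ℂ)] at this
  have h0 := Complex.exp_ne_zero (Complex.I * ⟪w', v⟫)
  grind

variable {ι : Type*} [Fintype ι]

noncomputable def atomicCharFun (x : ι → V) (γ : ι → ℝ) (v : V) : ℂ :=
  ∑ k, (γ k : ℂ) * Complex.exp (Complex.I * ⟪x k, v⟫)

lemma exists_atomicCharFun_ne_zero {x : ι → V} (hx : Injective x) {γ : ι → ℝ} (hγ : γ ≠ 0) :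
    ∃ v, atomicCharFun x γ v ≠ 0 := by
  by_contra! h
  have hli := (linearIndependent_monoidHom (Multiplicative V) ℂ).comp _
    (expInnerHom_injective.comp hx)
  refine hγ (funext fun k => ?_)
  have hsum : ∑ k, (γ k : ℂ) • ⇑(expInnerHom (x k)) = 0 := by
    funext v
    simpa [expInnerHom, atomicCharFun] using h v.toAdd
  exact_mod_cast Fintype.linearIndependent_iff.mp hli _ hsum k

lemma continuous_atomicCharFun (x : ι → V) (γ : ι → ℝ) : Continuous (atomicCharFun x γ) := by
  unfold atomicCharFun
  fun_prop

lemma ofReal_norm_sq_atomicCharFun_mul_gaussian (x : ι → V) (γ : ι → ℝ) (b : ℝ) (v : V) :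
    ((‖atomicCharFun x γ v‖ ^ 2 * exp (-b * ‖v‖ ^ 2) : ℝ) : ℂ) =
      ∑ i, ∑ j, (γ i * γ j : ℂ) * Complex.exp (-b * ‖v‖ ^ 2 + Complex.I * ⟪x i - x j, v⟫) := by
  rw [Complex.ofReal_mul, ← Complex.normSq_eq_norm_sq, ← Complex.mul_conj, atomicCharFun,
    map_sum, Finset.sum_mul_sum, Finset.sum_mul]
  refine Finset.sum_congr rfl fun i _ => Finset.sum_mul _ _ _ |>.trans ?_
  refine Finset.sum_congr rfl fun j _ => ?_
  rw [map_mul, ← Complex.exp_conj, inner_sub_left]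
  simp only [Complex.conj_ofReal, map_mul, Complex.conj_I, Complex.ofReal_exp]
  rw [Complex.ofReal_sub, mul_sub, sub_eq_add_neg, Complex.exp_add, Complex.exp_add,
    Complex.ofReal_mul, Complex.ofReal_neg, Complex.ofReal_pow, neg_mul, neg_mul]
  ring

variable [FiniteDimensional ℝ V]

section Integral

variable [MeasurableSpace V] [BorelSpace V]

lemma integrable_cexp_neg_mul_sq_norm_add_I_mul_inner {b : ℝ} (hb : 0 < b) (w : V) :
    Integrable fun v : V => Complex.exp (-b * ‖v‖ ^ 2 + Complex.I * ⟪w, v⟫) :=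
  GaussianFourier.integrable_cexp_neg_mul_sq_norm_add (by simpa using hb) _ w

lemma integrable_norm_sq_atomicCharFun_mul_gaussian (x : ι → V) (γ : ι → ℝ) {b : ℝ}
    (hb : 0 < b) : Integrable fun v => ‖atomicCharFun x γ v‖ ^ 2 * exp (-b * ‖v‖ ^ 2) := by
  have h : Integrable fun v => ((‖atomicCharFun x γ v‖ ^ 2 * exp (-b * ‖v‖ ^ 2) : ℝ) : ℂ) := by
    simp_rw [ofReal_norm_sq_atomicCharFun_mul_gaussian]
    exact integrable_finsetSum _ fun i _ => integrable_finsetSum _ fun j _ =>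
      (integrable_cexp_neg_mul_sq_norm_add_I_mul_inner hb _).const_mul _
  simpa only [RCLike.re_to_complex, Complex.ofReal_re] using h.re

lemma integral_norm_sq_atomicCharFun_mul_gaussian (x : ι → V) (γ : ι → ℝ) {b : ℝ} (hb : 0 < b) :
    ∫ v, ‖atomicCharFun x γ v‖ ^ 2 * exp (-b * ‖v‖ ^ 2) =
      (π / b) ^ (Module.finrank ℝ V / 2 : ℝ) *
        ∑ i, ∑ j, γ i * γ j * exp (-‖x i - x j‖ ^ 2 / (4 * b)) := by
  have hint := integrable_cexp_neg_mul_sq_norm_add_I_mul_inner hb (V := V)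
  apply Complex.ofReal_injective
  rw [← integral_complex_ofReal]
  simp_rw [ofReal_norm_sq_atomicCharFun_mul_gaussian]
  rw [integral_finsetSum _ fun i _ => integrable_finsetSum _ fun j _ => (hint _).const_mul _,
    Complex.ofReal_mul, Complex.ofReal_cpow (by positivity), Complex.ofReal_sum, Finset.mul_sum]
  refine Finset.sum_congr rfl fun i _ => ?_
  rw [integral_finsetSum _ fun j _ => (hint _).const_mul _, Complex.ofReal_sum, Finset.mul_sum]
  refine Finset.sum_congr rfl fun j _ => ?_
  rw [integral_const_mul, GaussianFourier.integral_cexp_neg_mul_sq_norm_add (by simpa using hb)]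
  push_cast
  rw [Complex.I_sq, neg_one_mul]
  ring

end Integral

lemma sum_mul_exp_neg_mul_norm_sub_sq_pos {x : ι → V} (hx : Injective x) {γ : ι → ℝ}
    (hγ : γ ≠ 0) {s : ℝ} (hs : 0 < s) :
    0 < ∑ i, ∑ j, γ i * γ j * exp (-s * ‖x i - x j‖ ^ 2) := by
  borelize V
  have hb : 0 < (4 * s)⁻¹ := by positivity
  obtain ⟨v, hv⟩ := exists_atomicCharFun_ne_zero hx hγ
  have hcont := continuous_atomicCharFun x γ
  have hpos := integral_pos_of_integrable_nonneg_nonzero (μ := volume) (x := v)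
    (f := fun v => ‖atomicCharFun x γ v‖ ^ 2 * exp (-(4 * s)⁻¹ * ‖v‖ ^ 2)) (by fun_prop)
    (integrable_norm_sq_atomicCharFun_mul_gaussian x γ hb) (fun v => by positivity)
    (mul_ne_zero (pow_ne_zero _ (norm_ne_zero_iff.mpr hv)) (exp_ne_zero _))
  rw [integral_norm_sq_atomicCharFun_mul_gaussian x γ hb] at hpos
  have hexp : ∀ t : ℝ, -t / (4 * (4 * s)⁻¹) = -s * t := fun t => by field_simp
  simp only [hexp] at hpos
  exact pos_of_mul_pos_right hpos (by positivity)

end GaussianKernel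

lemma setIntegral_Ioi_pos {a : ℝ} {f : ℝ → ℝ} (hf : IntegrableOn f (Ioi a))
    (hpos : ∀ x ∈ Ioi a, 0 < f x) : 0 < ∫ x in Ioi a, f x := by
  rw [setIntegral_pos_iff_support_of_nonneg_ae
      ((ae_restrict_iff' measurableSet_Ioi).mpr (ae_of_all _ fun x hx => (hpos x hx).le)) hf,
    inter_eq_right.mpr fun x hx => mem_support.mpr (hpos x hx).ne']
  simp

noncomputable def bernsteinIntegrand (a s : ℝ) : ℝ := (1 - exp (-(a * s))) * s ^ (-(3 / 2 : ℝ))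

lemma bernsteinIntegrand_nonneg {a s : ℝ} (ha : 0 ≤ a) (hs : 0 ≤ s) :
    0 ≤ bernsteinIntegrand a s :=
  mul_nonneg (sub_nonneg.mpr (exp_le_one_iff.mpr (by nlinarith))) (by positivity)

lemma bernsteinIntegrand_pos {a s : ℝ} (ha : 0 < a) (hs : 0 < s) :
    0 < bernsteinIntegrand a s :=
  mul_pos (sub_pos.mpr (exp_lt_one_iff.mpr (by nlinarith))) (by positivity)

lemma integrableOn_bernsteinIntegrand {a : ℝ} (ha : 0 ≤ a) :
    IntegrableOn (bernsteinIntegrand a) (Ioi 0) := by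
  have hmeas : AEStronglyMeasurable (bernsteinIntegrand a) := by
    unfold bernsteinIntegrand
    fun_prop
  rw [← Ioc_union_Ioi_eq_Ioi zero_le_one]
  refine IntegrableOn.union ?_ ?_
  · -- near `0`, `1 - e^{-as} ≤ as` tames the singularity to `a s^{-1/2}`
    refine Integrable.mono' ((intervalIntegral.intervalIntegrable_rpow' (a := 0) (b := 1)
      (by norm_num : (-1 : ℝ) < -1 / 2)).1.const_mul a) hmeas.restrict ?_
    refine (ae_restrict_iff' measurableSet_Ioc).mpr (ae_of_all _ fun s ⟨hs, _⟩ => ?_)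
    rw [norm_of_nonneg (bernsteinIntegrand_nonneg ha hs.le), bernsteinIntegrand,
      show -1 / 2 = 1 + -(3 / 2 : ℝ) by norm_num, rpow_add hs, rpow_one, ← mul_assoc]
    gcongr
    linarith [add_one_le_exp (-(a * s))]
  · refine Integrable.mono' (integrableOn_Ioi_rpow_of_lt (a := -(3 / 2)) (by norm_num) zero_lt_one)
      hmeas.restrict ?_
    refine (ae_restrict_iff' measurableSet_Ioi).mpr (ae_of_all _ fun s (hs : 1 < s) => ?_)
    rw [norm_of_nonneg (bernsteinIntegrand_nonneg ha (by linarith)), bernsteinIntegrand]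
    exact mul_le_of_le_one_left (by positivity) (by linarith [exp_pos (-(a * s))])

lemma setIntegral_bernsteinIntegrand {a : ℝ} (ha : 0 ≤ a) :
    ∫ s in Ioi 0, bernsteinIntegrand a s = √a * ∫ s in Ioi 0, bernsteinIntegrand 1 s := by
  rcases ha.eq_or_lt with rfl | ha
  · simp [bernsteinIntegrand]
  have hscale : ∀ s ∈ Ioi (0 : ℝ),
      bernsteinIntegrand a s = a ^ (3 / 2 : ℝ) * bernsteinIntegrand 1 (a * s) := by
    intro s hs
    rw [bernsteinIntegrand, bernsteinIntegrand, one_mul, mul_rpow ha.le (le_of_lt hs),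
      rpow_neg ha.le]
    field_simp
  rw [setIntegral_congr_fun measurableSet_Ioi hscale, integral_const_mul,
    integral_comp_mul_left_Ioi _ _ ha, mul_zero, smul_eq_mul, ← mul_assoc, sqrt_eq_rpow,
    ← rpow_neg_one, ← rpow_add ha]
  norm_num

section DistEnergy

variable {ι : Type*} [Fintype ι]

def distEnergy {E : Type*} [PseudoMetricSpace E] (x : ι → E) (γ : ι → ℝ) : ℝ :=
  ∑ i, ∑ j, γ i * γ j * (-(dist (x i) (x j)))

lemma distEnergy_pos {V : Type*} [NormedAddCommGroup V] [InnerProductSpace ℝ V]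
    [FiniteDimensional ℝ V] {x : ι → V} (hx : Injective x) {γ : ι → ℝ} (hγ : γ ≠ 0)
    (hsum : ∑ i, γ i = 0) : 0 < distEnergy x γ := by
  set g : ℝ → ℝ := fun s =>
    ∑ i, ∑ j, -(γ i * γ j * bernsteinIntegrand (dist (x i) (x j) ^ 2) s)
  have hterm : ∀ i j, IntegrableOn
      (fun s => -(γ i * γ j * bernsteinIntegrand (dist (x i) (x j) ^ 2) s)) (Ioi 0) :=
    fun i j => ((integrableOn_bernsteinIntegrand (sq_nonneg _)).const_mul _).neg
  have hg_int : IntegrableOn g (Ioi 0) :=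
    integrable_finsetSum _ fun i _ => integrable_finsetSum _ fun j _ => hterm i j
  have hg_integral : ∫ s in Ioi 0, g s =
      distEnergy x γ * ∫ s in Ioi 0, bernsteinIntegrand 1 s := by
    rw [integral_finsetSum _ fun i _ => integrable_finsetSum _ fun j _ => hterm i j,
      distEnergy, Finset.sum_mul]
    refine Finset.sum_congr rfl fun i _ => ?_
    rw [integral_finsetSum _ fun j _ => hterm i j, Finset.sum_mul]
    refine Finset.sum_congr rfl fun j _ => ?_
    rw [integral_neg, integral_const_mul, setIntegral_bernsteinIntegrand (sq_nonneg _),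
      sqrt_sq dist_nonneg]
    ring
  -- since `∑ γ = 0`, the constant part of `1 - e^{-as}` drops out, leaving Gaussian kernels
  have hg_gaussian : ∀ s, g s =
      (∑ i, ∑ j, γ i * γ j * exp (-s * ‖x i - x j‖ ^ 2)) * s ^ (-(3 / 2 : ℝ)) := by
    intro s
    have hzero : ∑ i, ∑ j, γ i * γ j * s ^ (-(3 / 2 : ℝ)) = 0 := by
      simp_rw [← Finset.sum_mul, ← Finset.mul_sum, ← Finset.sum_mul, hsum, zero_mul]
    rw [← sub_zero (_ * _), ← hzero, Finset.sum_mul, ← Finset.sum_sub_distrib]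
    refine Finset.sum_congr rfl fun i _ => ?_
    rw [Finset.sum_mul, ← Finset.sum_sub_distrib]
    refine Finset.sum_congr rfl fun j _ => ?_
    rw [bernsteinIntegrand, dist_eq_norm]
    ring_nf
  have hg_pos : 0 < ∫ s in Ioi 0, g s :=
    setIntegral_Ioi_pos hg_int fun s (hs : 0 < s) => by
      rw [hg_gaussian]
      exact mul_pos (sum_mul_exp_neg_mul_norm_sub_sq_pos hx hγ hs) (by positivity)
  rw [hg_integral] at hg_pos
  exact pos_of_mul_pos_left hg_pos
    (setIntegral_Ioi_pos (integrableOn_bernsteinIntegrand zero_le_one)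
      fun s hs => bernsteinIntegrand_pos one_pos hs).le

end DistEnergy

section Coercivity

variable {ι : Type*} [Fintype ι]

lemma continuous_distEnergy {E : Type*} [PseudoMetricSpace E] :
    Continuous fun p : (ι → E) × (ι → ℝ) => distEnergy p.1 p.2 := by
  unfold distEnergy
  fun_prop

lemma distEnergy_smul_right {E : Type*} [PseudoMetricSpace E] (x : ι → E) (γ : ι → ℝ) (c : ℝ) :
    distEnergy x (c • γ) = c ^ 2 * distEnergy x γ := by
  simp only [distEnergy, Finset.mul_sum, Pi.smul_apply, smul_eq_mul]
  exact Finset.sum_congr rfl fun i _ => Finset.sum_congr rfl fun j _ => by ring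

lemma distEnergy_smul_left {E : Type*} [NormedAddCommGroup E] [NormedSpace ℝ E] (x : ι → E)
    (γ : ι → ℝ) (c : ℝ) : distEnergy (c • x) γ = |c| * distEnergy x γ := by
  simp only [distEnergy, Finset.mul_sum, Pi.smul_apply, dist_smul₀, Real.norm_eq_abs]
  exact Finset.sum_congr rfl fun i _ => Finset.sum_congr rfl fun j _ => by ring

variable {V : Type*} [NormedAddCommGroup V] [InnerProductSpace ℝ V] [FiniteDimensional ℝ V]

variable (ι V) in
def normalizedConfigs (σ : ℝ) : Set ((ι → V) × (ι → ℝ)) :=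
  {p | (∀ i, ‖p.1 i‖ ≤ σ) ∧ Pairwise (fun i j => 1 ≤ dist (p.1 i) (p.1 j)) ∧
    ∑ i, p.2 i = 0 ∧ ∑ i, p.2 i ^ 2 = 1}

lemma isCompact_normalizedConfigs (σ : ℝ) : IsCompact (normalizedConfigs ι V σ) := by
  have hclosed : IsClosed (normalizedConfigs ι V σ) := by
    simp only [normalizedConfigs, Pairwise, ofPred_and, ofPred_forall]
    refine .inter ?_ (.inter ?_ (.inter ?_ ?_))
    · exact isClosed_iInter fun i => isClosed_le (by fun_prop) (by fun_prop)
    · exact isClosed_iInter fun i => isClosed_iInter fun j => isClosed_iInter fun _ =>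
        isClosed_le (by fun_prop) (by fun_prop)
    · exact isClosed_eq (by fun_prop) (by fun_prop)
    · exact isClosed_eq (by fun_prop) (by fun_prop)
  refine ((isCompact_univ_pi fun _ => isCompact_closedBall (0 : V) σ).prod
    (isCompact_univ_pi fun _ => isCompact_closedBall (0 : ℝ) 1)).of_isClosed_subset hclosed ?_
  rintro ⟨x, γ⟩ ⟨hx, -, -, hγ⟩
  refine ⟨fun i _ => mem_closedBall_zero_iff.mpr (hx i), fun i _ => ?_⟩
  rw [mem_closedBall_zero_iff, norm_eq_abs, ← sq_le_one_iff_abs_le_one, ← hγ]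
  exact Finset.single_le_sum (f := fun i => γ i ^ 2) (fun i _ => sq_nonneg _) (mem_univ i)

lemma distEnergy_pos_of_mem_normalizedConfigs {σ : ℝ} {p : (ι → V) × (ι → ℝ)}
    (hp : p ∈ normalizedConfigs ι V σ) : 0 < distEnergy p.1 p.2 := by
  obtain ⟨-, hsep, hsum, hγ⟩ := hp
  refine distEnergy_pos (fun i j hxij => by_contra fun hij => ?_) (fun h => ?_) hsum
  · have : 1 ≤ dist (p.1 i) (p.1 j) := hsep hij
    rw [hxij, dist_self] at this
    linarith
  · simp [h] at hγ

lemma exists_pos_mul_sum_sq_le_distEnergy (σ : ℝ) :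
    ∃ c > 0, ∀ x : ι → V, (∀ i, ‖x i‖ ≤ σ) → Pairwise (fun i j => 1 ≤ dist (x i) (x j)) →
      ∀ γ : ι → ℝ, ∑ i, γ i = 0 → c * ∑ i, γ i ^ 2 ≤ distEnergy x γ := by
  obtain ⟨c, hc, hcS⟩ := (isCompact_normalizedConfigs (ι := ι) (V := V) σ).exists_forall_le'
    continuous_distEnergy.continuousOn fun p => distEnergy_pos_of_mem_normalizedConfigs
  refine ⟨c, hc, fun x hx hsep γ hsum => ?_⟩
  rcases eq_or_ne γ 0 with rfl | hγ
  · simp [distEnergy]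
  have hN : 0 < ∑ i, γ i ^ 2 := by
    obtain ⟨i, hi⟩ := Function.ne_iff.mp hγ
    exact Finset.sum_pos' (fun i _ => sq_nonneg _) ⟨i, mem_univ i, pow_two_pos_of_ne_zero hi⟩
  have hmem : (x, (√(∑ i, γ i ^ 2))⁻¹ • γ) ∈ normalizedConfigs ι V σ := by
    refine ⟨hx, hsep, by simp [← Finset.mul_sum, hsum], ?_⟩
    simp only [Pi.smul_apply, smul_eq_mul, mul_pow, ← Finset.mul_sum, inv_pow, sq_sqrt hN.le]
    exact inv_mul_cancel₀ hN.ne'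
  have := hcS _ hmem
  rwa [distEnergy_smul_right, inv_pow, sq_sqrt hN.le, ← div_eq_inv_mul, le_div_iff₀ hN] at this

lemma exists_pos_mul_mul_sum_sq_le_distEnergy (σ : ℝ) :
    ∃ c > 0, ∀ r > 0, ∀ x : ι → V, (∀ i, ‖x i‖ ≤ σ * r) →
      Pairwise (fun i j => r ≤ dist (x i) (x j)) →
      ∀ γ : ι → ℝ, ∑ i, γ i = 0 → c * r * ∑ i, γ i ^ 2 ≤ distEnergy x γ := by
  obtain ⟨c, hc, hcoer⟩ := exists_pos_mul_sum_sq_le_distEnergy (ι := ι) (V := V) σ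
  refine ⟨c, hc, fun r hr x hx hsep γ hsum => ?_⟩
  have hx' : ∀ i, ‖(r⁻¹ • x) i‖ ≤ σ := fun i => by
    rw [Pi.smul_apply, norm_smul, norm_inv, norm_of_nonneg hr.le, inv_mul_le_iff₀ hr, mul_comm]
    exact hx i
  have hsep' : Pairwise fun i j => 1 ≤ dist ((r⁻¹ • x) i) ((r⁻¹ • x) j) := fun i j hij => by
    dsimp only
    rw [Pi.smul_apply, Pi.smul_apply, dist_smul₀, norm_inv, norm_of_nonneg hr.le,
      le_inv_mul_iff₀ hr, mul_one]
    exact hsep hij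
  have := hcoer _ hx' hsep' γ hsum
  rw [distEnergy_smul_left, abs_inv, abs_of_pos hr, le_inv_mul_iff₀ hr] at this
  linarith

end Coercivity

lemma sum_abs_le_sqrt_card_mul_sqrt_sum_sq {ι : Type*} [Fintype ι] (γ : ι → ℝ) :
    ∑ i, |γ i| ≤ √(Fintype.card ι) * √(∑ i, γ i ^ 2) := by
  rw [← sqrt_mul (by positivity)]
  refine le_sqrt_of_sq_le ?_
  simpa [sq_abs] using sq_sum_le_card_mul_sum_sq (s := univ) (f := fun i => |γ i|)

theorem tv_bound_no_collapse_general (d n : ℕ) (σ : ℝ) :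
    ∃ lam : ℝ, 0 < lam ∧
      ∀ (r : ℝ), 0 < r →
      ∀ (x : Fin n → EuclideanSpace ℝ (Fin d)) (γ : Fin n → ℝ),
        (∀ i, ‖x i‖ ≤ σ * r) →
        (∀ i j, i ≠ j → r ≤ dist (x i) (x j)) →
        (∑ i, γ i = 0) →
        ∑ i, |γ i| ≤ lam * Real.sqrt (n / r) *
          Real.sqrt (∑ i, ∑ j, γ i * γ j * (-(dist (x i) (x j)))) := by
  obtain ⟨c, hc, hcoer⟩ :=
    exists_pos_mul_mul_sum_sq_le_distEnergy (ι := Fin n) (V := EuclideanSpace ℝ (Fin d)) σ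
  refine ⟨(√c)⁻¹, by positivity, fun r hr x γ hx hsep hsum => ?_⟩
  calc ∑ i, |γ i| ≤ √n * √(∑ i, γ i ^ 2) := by
        simpa using sum_abs_le_sqrt_card_mul_sqrt_sum_sq γ
    _ = (√c)⁻¹ * √(n / r) * √(c * r * ∑ i, γ i ^ 2) := by
        rw [sqrt_mul' _ (by positivity), sqrt_mul hc.le, sqrt_div' _ hr.le]
        field_simp
    _ ≤ (√c)⁻¹ * √(n / r) * √(distEnergy x γ) := by
        gcongr
        exact hcoer r hr x hx hsep γ hsum

/-- TV bound without collapse: there is `λ_σ > 0` (depending only on `σ`, `n`,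
`d`) such that any zero-sum atomic vector of coefficients on `n` points of the
ball `B(0,σr)` with pairwise separation at least `r` satisfies
`|Γ|_TV ≤ λ_σ √(n/r) ‖Γ‖_K`, where `‖Γ‖_K² = Σ_{i,j} γ_i γ_j K(x_i,x_j)` for
the Energy-Distance kernel `K(x,y) = -|x-y|`. -/
theorem tv_bound_no_collapse (d n : ℕ) (hn : 1 ≤ n) (σ : ℝ) (hσ : 0 < σ) :
    ∃ lam : ℝ, 0 < lam ∧
      ∀ (r : ℝ), 0 < r →
      ∀ (x : Fin n → EuclideanSpace ℝ (Fin d)) (γ : Fin n → ℝ),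
        (∀ i, ‖x i‖ ≤ σ * r) →
        (∀ i j, i ≠ j → r ≤ dist (x i) (x j)) →
        (∑ i, γ i = 0) →
        ∑ i, |γ i| ≤ lam * Real.sqrt (n / r) *
          Real.sqrt (∑ i, ∑ j, γ i * γ j * (-(dist (x i) (x j)))) :=
  tv_bound_no_collapse_general d n σ
end

section
/- If μ = Σ_{i=1}^k v_i δ_{x_i} with distinct points x_i, Σ_i v_i = 0, Σ_i |v_i| = 1, v_i ≠ 0, and (v_1, …, v_{k-1}) NOT linearly independent, then μ is not an extremal point of the set {Γ : Γ(Ω)=0, |Γ|_TV ≤ 1}: there exist distinct measures ν_1, ν_2 in the set and t ∈ (0,1) with μ = t ν_1 + (1-t) ν_2. -/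
/-!
The dependence of `v₁, …, v_{k-1}` gives coefficients `l` with `∑ lᵢ vᵢ = 0`, `l_k = 0` and
`l ≠ 0`, so `l` is not constant. Since `∑ vᵢ = 0`, shifting `l` by a constant keeps it a
dependence, and a suitable shift makes `∑ lᵢ ‖vᵢ‖ = 0`; rescale so that `|lᵢ| ≤ 1`. The masses
`(1 ± lᵢ) vᵢ` then still sum to zero and have total norm `∑ (1 ± lᵢ) ‖vᵢ‖ = 1`, and `μ` is the
average of the two measures they define at the points `xᵢ`. These differ because every `vᵢ` is
nonzero and the `xᵢ` are distinct.
-/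

open MeasureTheory

/-- Total variation norm of an `ℝ^d`-valued measure, given through its `d`
components as signed measures. -/
noncomputable def vecTV {d : ℕ} {α : Type*} [MeasurableSpace α]
    (Γ : Fin d → SignedMeasure α) : ℝ :=
  sSup {c : ℝ | ∃ P : Finset (Set α), (∀ E ∈ P, MeasurableSet E) ∧
    ((P : Set (Set α)).Pairwise Disjoint) ∧
    c = ∑ E ∈ P, Real.sqrt (∑ i, (Γ i E) ^ 2)}

/-- The unit ball of zero-total-mass `ℝ^d`-valued measures supported in `Ω`. -/
def zeroMassTVBall (d : ℕ) (Ω : Set (EuclideanSpace ℝ (Fin d))) :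
    Set (Fin d → SignedMeasure (EuclideanSpace ℝ (Fin d))) :=
  {Γ | (∀ i, Γ i Set.univ = 0) ∧
    (∀ i, ∀ E : Set (EuclideanSpace ℝ (Fin d)), MeasurableSet E → E ⊆ Ωᶜ → Γ i E = 0) ∧
    vecTV Γ ≤ 1}

open Finset Function

theorem exists_dependence_of_not_linearIndependent_comp {R ι κ M : Type*} [Ring R]
    [AddCommGroup M] [Module R M] [Fintype ι] {v : ι → M} {f : κ → ι} (hf : Injective f)
    {i₀ : ι} (hi₀ : ∀ j, f j ≠ i₀) (h : ¬ LinearIndependent R (v ∘ f)) :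
    ∃ l : ι → R, ∑ i, l i • v i = 0 ∧ l i₀ = 0 ∧ l ≠ 0 := by
  obtain ⟨l, hl, hl0⟩ := not_linearIndependent_iff_linearCombination.mp h
  refine ⟨l.mapDomain f, ?_, Finsupp.mapDomain_of_notMem_range _ _ fun ⟨j, hj⟩ => hi₀ j hj, ?_⟩
  · rw [← Finsupp.linearCombination_mapDomain] at hl
    rwa [Finsupp.linearCombination_apply,
      Finsupp.sum_fintype _ _ fun i => zero_smul R (v i)] at hl
  · rw [Ne, ← Finsupp.coe_zero, DFunLike.coe_fn_eq, ← Finsupp.mapDomain_zero (f := f)]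
    exact (Finsupp.mapDomain_injective hf).ne hl0

theorem exists_bounded_dependence_orthogonal {ι M : Type*} [Fintype ι] [AddCommGroup M]
    [Module ℝ M] {v : ι → M} (hv : ∑ i, v i = 0) {w : ι → ℝ} (hw : ∑ i, w i ≠ 0)
    {l : ι → ℝ} (hl : ∑ i, l i • v i = 0) {i₀ j₀ : ι} (hl_ne : l i₀ ≠ l j₀) :
    ∃ m : ι → ℝ, m ≠ 0 ∧ (∀ i, |m i| ≤ 1) ∧ ∑ i, m i • v i = 0 ∧ ∑ i, m i * w i = 0 := by
  set c := (∑ i, l i * w i) / ∑ i, w i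
  set m₀ : ι → ℝ := fun i => l i - c
  have hm₀ : m₀ ≠ 0 := fun h => hl_ne <| by
    have h₁ := congrFun h i₀
    have h₂ := congrFun h j₀
    simp only [m₀, Pi.zero_apply, sub_eq_zero] at h₁ h₂
    rw [h₁, h₂]
  have hm₀v : ∑ i, m₀ i • v i = 0 := by
    simp only [m₀, sub_smul, sum_sub_distrib, hl, ← smul_sum, hv, smul_zero,
      sub_zero]
  have hm₀w : ∑ i, m₀ i * w i = 0 := by
    simp only [m₀, sub_mul, sum_sub_distrib, ← mul_sum, c]
    field_simp
    ring
  have hnorm : 0 < ‖m₀‖ := norm_pos_iff.mpr hm₀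
  refine ⟨‖m₀‖⁻¹ • m₀, smul_ne_zero (inv_ne_zero hnorm.ne') hm₀, fun i => ?_, ?_, ?_⟩
  · rw [Pi.smul_apply, smul_eq_mul, abs_mul, abs_inv, abs_norm, ← Real.norm_eq_abs]
    exact inv_mul_le_one_of_le₀ (norm_le_pi_norm m₀ i) hnorm.le
  · simp only [Pi.smul_apply, smul_eq_mul, mul_smul, ← smul_sum, hm₀v, smul_zero]
  · simp only [Pi.smul_apply, smul_eq_mul, mul_assoc, ← mul_sum, hm₀w, mul_zero]

open Classical in
theorem card_filter_mem_le_one {α : Type*} {P : Finset (Set α)}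
    (hP : (P : Set (Set α)).Pairwise Disjoint) (a : α) : #{E ∈ P | a ∈ E} ≤ 1 :=
  card_le_one.mpr fun E hE F hF => by
    rw [mem_filter] at hE hF
    by_contra hEF
    exact Set.disjoint_left.mp (hP hE.1 hF.1 hEF) hE.2 hF.2

section Perturbation

variable {ι M : Type*} {v : ι → M} {m : ι → ℝ}

theorem sum_one_add_smul [Fintype ι] [AddCommGroup M] [Module ℝ M] (hm : ∑ i, m i • v i = 0) :
    ∑ i, ((1 + m) • v) i = ∑ i, v i := by
  simp only [Pi.smul_apply', Pi.add_apply, Pi.one_apply, add_smul, one_smul,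
    sum_add_distrib, hm, add_zero]

theorem sum_one_sub_smul [Fintype ι] [AddCommGroup M] [Module ℝ M] (hm : ∑ i, m i • v i = 0) :
    ∑ i, ((1 - m) • v) i = ∑ i, v i := by
  rw [sub_eq_add_neg]
  exact sum_one_add_smul (by simp only [Pi.neg_apply, neg_smul, sum_neg_distrib, hm,
    neg_zero])

theorem sum_norm_one_add_smul [Fintype ι] [SeminormedAddCommGroup M] [NormedSpace ℝ M]
    (hm₁ : ∀ i, |m i| ≤ 1) (hm : ∑ i, m i * ‖v i‖ = 0) :
    ∑ i, ‖((1 + m) • v) i‖ = ∑ i, ‖v i‖ := by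
  have h (i : ι) : ‖((1 + m) • v) i‖ = ‖v i‖ + m i * ‖v i‖ := by
    rw [Pi.smul_apply', Pi.add_apply, Pi.one_apply, norm_smul,
      Real.norm_of_nonneg (by linarith [neg_abs_le (m i), hm₁ i])]
    ring
  simp only [h, sum_add_distrib, hm, add_zero]

theorem sum_norm_one_sub_smul [Fintype ι] [SeminormedAddCommGroup M] [NormedSpace ℝ M]
    (hm₁ : ∀ i, |m i| ≤ 1) (hm : ∑ i, m i * ‖v i‖ = 0) :
    ∑ i, ‖((1 - m) • v) i‖ = ∑ i, ‖v i‖ := by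
  rw [sub_eq_add_neg]
  exact sum_norm_one_add_smul (by simpa only [Pi.neg_apply, abs_neg] using hm₁)
    (by simp only [Pi.neg_apply, neg_mul, sum_neg_distrib, hm, neg_zero])

theorem one_add_smul_ne_one_sub_smul [AddCommGroup M] [Module ℝ M] (hv : ∀ i, v i ≠ 0)
    (hm : m ≠ 0) : (1 + m) • v ≠ (1 - m) • v := by
  obtain ⟨i, hi⟩ := Function.ne_iff.mp hm
  intro h
  have : (2 * m i) • v i = 0 := by
    have := congrFun h i
    simp only [Pi.smul_apply', Pi.add_apply, Pi.sub_apply, Pi.one_apply] at this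
    rw [← sub_eq_zero, ← sub_smul] at this
    rwa [show 1 + m i - (1 - m i) = 2 * m i by ring] at this
  simp only [smul_eq_zero, mul_eq_zero, two_ne_zero, false_or] at this
  exact this.elim hi (hv i)

end Perturbation

section DiracSum

variable {d : ℕ} {ι α : Type*} [Fintype ι] [MeasurableSpace α]

noncomputable def diracSum (x : ι → α) :
    (ι → EuclideanSpace ℝ (Fin d)) →ₗ[ℝ] Fin d → SignedMeasure α where
  toFun u j := ∑ i, u i j • (Measure.dirac (x i)).toSignedMeasure
  map_add' u w := by
    funext j
    simp only [Pi.add_apply, PiLp.add_apply, add_smul, sum_add_distrib]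
  map_smul' c u := by
    funext j
    simp only [Pi.smul_apply, PiLp.smul_apply, smul_eq_mul, mul_smul, smul_sum,
      RingHom.id_apply]

open Classical in
theorem sum_smul_dirac_apply (x : ι → α) (u : ι → ℝ) {E : Set α} (hE : MeasurableSet E) :
    (∑ i, u i • (Measure.dirac (x i)).toSignedMeasure) E = ∑ i with x i ∈ E, u i := by
  rw [FunLike.coe_sum, Finset.sum_apply, sum_filter]
  refine sum_congr rfl fun i _ => ?_
  rw [_root_.smul_apply, Measure.toSignedMeasure_apply_measurable hE, measureReal_def,
    Measure.dirac_apply' _ hE]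
  by_cases h : x i ∈ E <;> simp [h]

open Classical in
theorem diracSum_apply (x : ι → α) (u : ι → EuclideanSpace ℝ (Fin d)) (j : Fin d) {E : Set α}
    (hE : MeasurableSet E) : diracSum x u j E = (∑ i with x i ∈ E, u i) j := by
  rw [diracSum, LinearMap.coe_mk, AddHom.coe_mk, sum_smul_dirac_apply x _ hE, WithLp.ofLp_sum,
    Finset.sum_apply]

open Classical in
theorem vecTV_diracSum_le (x : ι → α) (u : ι → EuclideanSpace ℝ (Fin d)) :
    vecTV (diracSum x u) ≤ ∑ i, ‖u i‖ := by
  refine Real.sSup_le ?_ (sum_nonneg fun i _ => norm_nonneg _)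
  rintro _ ⟨P, hPm, hPd, rfl⟩
  have hnorm (E : Set α) (hE : E ∈ P) :
      √(∑ j, diracSum x u j E ^ 2) = ‖∑ i with x i ∈ E, u i‖ := by
    simp only [diracSum_apply x u _ (hPm E hE), EuclideanSpace.norm_eq, Real.norm_eq_abs, sq_abs]
  calc ∑ E ∈ P, √(∑ j, diracSum x u j E ^ 2)
      = ∑ E ∈ P, ‖∑ i with x i ∈ E, u i‖ := sum_congr rfl hnorm
    _ ≤ ∑ E ∈ P, ∑ i with x i ∈ E, ‖u i‖ := sum_le_sum fun E _ => norm_sum_le _ _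
    _ = ∑ i, ∑ E ∈ P with x i ∈ E, ‖u i‖ := by simp only [sum_filter]; exact sum_comm
    _ = ∑ i, #{E ∈ P | x i ∈ E} * ‖u i‖ := by simp only [sum_const, nsmul_eq_mul]
    _ ≤ ∑ i, ‖u i‖ := sum_le_sum fun i _ =>
      mul_le_of_le_one_left (norm_nonneg _) (by exact_mod_cast card_filter_mem_le_one hPd (x i))

open Classical in
theorem diracSum_mem_zeroMassTVBall {Ω : Set (EuclideanSpace ℝ (Fin d))}
    {x : ι → EuclideanSpace ℝ (Fin d)} (hx : ∀ i, x i ∈ Ω) {u : ι → EuclideanSpace ℝ (Fin d)}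
    (hu : ∑ i, u i = 0) (hu₁ : ∑ i, ‖u i‖ ≤ 1) : diracSum x u ∈ zeroMassTVBall d Ω := by
  refine ⟨fun j => ?_, fun j E hE hEΩ => ?_, (vecTV_diracSum_le x u).trans hu₁⟩
  · simp [diracSum_apply x u j MeasurableSet.univ, hu]
  · rw [diracSum_apply x u j hE, filter_false_of_mem fun i _ hi => hEΩ hi (hx i)]
    rfl

open Classical in
theorem diracSum_apply_singleton [MeasurableSingletonClass α] {x : ι → α} (hx : Injective x)
    (u : ι → EuclideanSpace ℝ (Fin d)) (i : ι) (j : Fin d) : diracSum x u j {x i} = u i j := by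
  rw [diracSum_apply x u j (measurableSet_singleton _),
    sum_eq_single i (fun c hc hci => absurd (hx (by simpa using hc)) hci) (by simp)]

theorem diracSum_injective [MeasurableSingletonClass α] {x : ι → α} (hx : Injective x) :
    Injective (diracSum (d := d) x) := fun u w h => by
  funext i
  ext j
  rw [← diracSum_apply_singleton hx u, ← diracSum_apply_singleton hx w, h]

end DiracSum

theorem not_extremal_of_dependent_general (d : ℕ) (Ω : Set (EuclideanSpace ℝ (Fin d))) (k : ℕ)
    (x : Fin k → EuclideanSpace ℝ (Fin d)) (v : Fin k → EuclideanSpace ℝ (Fin d))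
    (hxinj : Function.Injective x) (hxΩ : ∀ i, x i ∈ Ω)
    (hvne : ∀ i, v i ≠ 0) (hsum : ∑ i, v i = 0) (htv : ∑ i, ‖v i‖ = 1)
    (hdep : ¬ LinearIndependent ℝ (fun i : Fin (k - 1) => v (Fin.castLE (Nat.sub_le k 1) i)))
    (μ : Fin d → SignedMeasure (EuclideanSpace ℝ (Fin d)))
    (hμ : ∀ j : Fin d, μ j = ∑ i, (v i j) • (Measure.dirac (x i)).toSignedMeasure) :
    ∃ ν₁ ν₂ : Fin d → SignedMeasure (EuclideanSpace ℝ (Fin d)),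
      ν₁ ∈ zeroMassTVBall d Ω ∧ ν₂ ∈ zeroMassTVBall d Ω ∧ ν₁ ≠ ν₂ ∧
      ∃ t ∈ Set.Ioo (0:ℝ) 1, μ = t • ν₁ + (1 - t) • ν₂ := by
  have hk : 0 < k := by
    by_contra! hk
    obtain rfl : k = 0 := by omega
    exact hdep (linearIndependent_empty_type (ι := Fin 0))
  let last : Fin k := ⟨k - 1, by omega⟩
  obtain ⟨l, hlv, hl_last, hl0⟩ := exists_dependence_of_not_linearIndependent_comp
    (Fin.castLE_injective _) (i₀ := last) (fun j h => by simp [last, Fin.ext_iff] at h; omega) hdep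
  obtain ⟨j₀, hj₀⟩ := Function.ne_iff.mp hl0
  obtain ⟨m, hm0, hm₁, hmv, hmw⟩ := exists_bounded_dependence_orthogonal hsum
    (w := fun i => ‖v i‖) (by simp [htv]) hlv (i₀ := j₀) (j₀ := last)
    (by rw [hl_last]; exact hj₀)
  refine ⟨diracSum x ((1 + m) • v), diracSum x ((1 - m) • v),
    diracSum_mem_zeroMassTVBall hxΩ (by rw [sum_one_add_smul hmv, hsum])
      (sum_norm_one_add_smul hm₁ hmw ▸ htv.le),
    diracSum_mem_zeroMassTVBall hxΩ (by rw [sum_one_sub_smul hmv, hsum])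
      (sum_norm_one_sub_smul hm₁ hmw ▸ htv.le),
    (diracSum_injective hxinj).ne (one_add_smul_ne_one_sub_smul hvne hm0),
    1 / 2, by norm_num, ?_⟩
  rw [show μ = diracSum x v from funext hμ, ← map_smul, ← map_smul, ← map_add]
  congr 1
  funext i
  simp only [Pi.add_apply, Pi.smul_apply, Pi.smul_apply', Pi.sub_apply, Pi.one_apply]
  module

/-- If `μ = Σ_{i=1}^k v_i δ_{x_i}` with distinct `x_i ∈ Ω`, nonzero `v_i`,
`Σ v_i = 0`, `Σ|v_i| = 1` and `(v_1,…,v_{k-1})` NOT linearly independent, then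
`μ` is not extremal in the TV unit ball of zero-mass vector measures: it is a
nontrivial convex combination of two distinct elements of the ball. -/
theorem not_extremal_of_dependent (d : ℕ) (Ω : Set (EuclideanSpace ℝ (Fin d)))
    (hΩ : IsCompact Ω) (k : ℕ)
    (x : Fin k → EuclideanSpace ℝ (Fin d)) (v : Fin k → EuclideanSpace ℝ (Fin d))
    (hxinj : Function.Injective x) (hxΩ : ∀ i, x i ∈ Ω)
    (hvne : ∀ i, v i ≠ 0) (hsum : ∑ i, v i = 0) (htv : ∑ i, ‖v i‖ = 1)
    (hdep : ¬ LinearIndependent ℝ (fun i : Fin (k - 1) => v (Fin.castLE (Nat.sub_le k 1) i)))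
    (μ : Fin d → SignedMeasure (EuclideanSpace ℝ (Fin d)))
    (hμ : ∀ j : Fin d, μ j = ∑ i, (v i j) • (Measure.dirac (x i)).toSignedMeasure) :
    ∃ ν₁ ν₂ : Fin d → SignedMeasure (EuclideanSpace ℝ (Fin d)),
      ν₁ ∈ zeroMassTVBall d Ω ∧ ν₂ ∈ zeroMassTVBall d Ω ∧ ν₁ ≠ ν₂ ∧
      ∃ t ∈ Set.Ioo (0:ℝ) 1, μ = t • ν₁ + (1 - t) • ν₂ :=
  not_extremal_of_dependent_general d Ω k x v hxinj hxΩ hvne hsum htv hdep μ hμ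
end
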